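/- arXiv:1907.01928 — 4 statements merged into one kernel-verified Lean document; each statement's English description precedes it below -/
import Mathlib

section
/- The multiplication operator f ↦ σ f is bounded from the weighted Sobolev space 𝔇 to the weighted L² space 𝔥: there exists C > 0 such that ∫_ℝ σ² f(σ)² e^{−σ²/4} dσ ≤ C ∫_ℝ (f(σ)² + f'(σ)²) e^{−σ²/4} dσ for all f ∈ C_c^∞(ℝ). -/
open MeasureTheory Set

private lemma weight_hasDerivAt (σ : ℝ) :
    HasDerivAt (fun s : ℝ => Real.exp (-s ^ 2 / 4)) (-(σ / 2) * Real.exp (-σ ^ 2 / 4)) σ := by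
  have h1 : HasDerivAt (fun s : ℝ => -s ^ 2 / 4) (-(σ / 2)) σ := by
    have : HasDerivAt (fun s : ℝ => -s ^ 2 / 4) (-(((2 : ℕ) : ℝ) * σ ^ (2 - 1)) / 4) σ :=
      ((hasDerivAt_pow 2 σ).neg).div_const 4
    convert this using 1
    push_cast
    ring
  simpa [mul_comm] using h1.exp

/-- The multiplication operator `f ↦ σ f` is bounded from the weighted Sobolev space `𝔇`
to the weighted `L²` space `𝔥`. -/
theorem stmt5 :
    ∃ C : ℝ, 0 < C ∧
      ∀ f : ℝ → ℝ, ContDiff ℝ (⊤ : ℕ∞) f → HasCompactSupport f →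
        ∫ σ : ℝ, σ ^ 2 * (f σ) ^ 2 * Real.exp (-σ ^ 2 / 4)
          ≤ C * ∫ σ : ℝ, ((f σ) ^ 2 + (deriv f σ) ^ 2) * Real.exp (-σ ^ 2 / 4) := by
  refine ⟨16, by norm_num, fun f hf hsupp => ?_⟩
  set w : ℝ → ℝ := fun s => Real.exp (-s ^ 2 / 4) with hw_def
  have hw_cont : Continuous w :=
    Real.continuous_exp.comp (((continuous_pow 2).neg).div_const 4)
  have hf_diff : Differentiable ℝ f := hf.differentiable (by simp)
  have hf_cont : Continuous f := hf.continuous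
  have hf'_cont : Continuous (deriv f) := hf.continuous_deriv (by simp)
  -- supports
  have hsupp2 : HasCompactSupport (fun σ : ℝ => f σ * f σ) := hsupp.mul_left
  -- integrability helper
  have hint : ∀ g : ℝ → ℝ, Continuous g →
      Integrable (fun σ : ℝ => g σ * (f σ * f σ) * w σ) := by
    intro g hg
    exact ((hg.mul (hf_cont.mul hf_cont)).mul hw_cont).integrable_of_hasCompactSupport
      ((hsupp2.mul_left).mul_right)
  have hintA : Integrable (fun σ : ℝ => f σ ^ 2 * w σ) := by
    have := hint (fun _ => 1) continuous_const
    simpa [sq, mul_assoc, one_mul] using this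
  have hintX : Integrable (fun σ : ℝ => σ ^ 2 * f σ ^ 2 * w σ) := by
    have := hint (fun σ => σ ^ 2) (continuous_pow 2)
    simpa [sq, mul_assoc, mul_comm, mul_left_comm] using this
  have hintM : Integrable (fun σ : ℝ => 2 * σ * f σ * deriv f σ * w σ) := by
    have hc : Continuous fun σ : ℝ => 2 * σ * f σ * deriv f σ * w σ :=
      ((((continuous_const.mul continuous_id).mul hf_cont).mul hf'_cont).mul hw_cont)
    apply hc.integrable_of_hasCompactSupport
    apply HasCompactSupport.mul_right
    exact ((hsupp.mul_left).mul_right : HasCompactSupport fun σ : ℝ => 2 * σ * f σ * deriv f σ)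
  have hintB : Integrable (fun σ : ℝ => deriv f σ ^ 2 * w σ) := by
    have hc : Continuous fun σ : ℝ => deriv f σ ^ 2 * w σ := (hf'_cont.pow 2).mul hw_cont
    apply hc.integrable_of_hasCompactSupport
    apply HasCompactSupport.mul_right
    have hds : HasCompactSupport (deriv f) := hsupp.deriv
    exact hds.mul_left
  have hintX2 : Integrable (fun σ : ℝ => σ ^ 2 / 2 * f σ ^ 2 * w σ) := by
    have heq : (fun σ : ℝ => σ ^ 2 / 2 * f σ ^ 2 * w σ)
        = fun σ : ℝ => σ ^ 2 * f σ ^ 2 * w σ / 2 := by funext σ; ring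
    rw [heq]; exact hintX.div_const 2
  -- the function whose derivative we integrate
  set g : ℝ → ℝ := fun σ => σ * f σ ^ 2 * w σ with hg_def
  set G : ℝ → ℝ := fun σ =>
    f σ ^ 2 * w σ + 2 * σ * f σ * deriv f σ * w σ - σ ^ 2 / 2 * f σ ^ 2 * w σ with hG_def
  have hgderiv : ∀ σ, HasDerivAt g (G σ) σ := by
    intro σ
    have hfp : HasDerivAt (fun s : ℝ => f s ^ 2) (2 * f σ * deriv f σ) σ := by
      have := ((hf_diff σ).hasDerivAt).fun_pow 2
      simpa [mul_comm, mul_assoc] using this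
    have h1 : HasDerivAt (fun s : ℝ => s * f s ^ 2)
        (1 * f σ ^ 2 + σ * (2 * f σ * deriv f σ)) σ := (hasDerivAt_id σ).mul hfp
    have h2 : HasDerivAt g ((1 * f σ ^ 2 + σ * (2 * f σ * deriv f σ)) * Real.exp (-σ ^ 2 / 4) +
        σ * f σ ^ 2 * (-(σ / 2) * Real.exp (-σ ^ 2 / 4))) σ := h1.fun_mul (weight_hasDerivAt σ)
    convert h2 using 1
    simp only [hG_def, hw_def]
    ring
  have hderiv_g : deriv g = G := funext fun σ => (hgderiv σ).deriv
  have hg_contdiff : ContDiff ℝ 1 g := by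
    have hwsm : ContDiff ℝ 1 w :=
      Real.contDiff_exp.comp (ContDiff.div_const (contDiff_id.pow 2).neg 4)
    exact ((contDiff_id.mul ((hf.of_le (by simp)).pow 2)).mul hwsm :)
  have hg_supp : HasCompactSupport g := by
    have hfs : HasCompactSupport (fun σ : ℝ => f σ ^ 2) := by
      simpa [sq] using hsupp2
    exact (hfs.mul_left.mul_right :)
  have hG_cont : Continuous G := by
    simp only [hG_def]
    exact (((hf_cont.pow 2).mul hw_cont).add
      ((((continuous_const.mul continuous_id).mul hf_cont).mul hf'_cont).mul hw_cont)).sub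
      ((((continuous_pow 2).div_const 2).mul (hf_cont.pow 2)).mul hw_cont)
  have hG_supp : HasCompactSupport G := by
    rw [← hderiv_g]
    exact hg_supp.deriv
  have hG_int : Integrable G := hG_cont.integrable_of_hasCompactSupport hG_supp
  have hG_zero : ∫ σ : ℝ, G σ = 0 := by
    rw [← hderiv_g]
    have hint' : Integrable (deriv g) := hderiv_g ▸ hG_int
    rw [← intervalIntegral.integral_Iic_add_Ioi (b := 0) hint'.integrableOn hint'.integrableOn]
    rw [hg_supp.integral_Iic_deriv_eq hg_contdiff 0,
      hg_supp.integral_Ioi_deriv_eq hg_contdiff 0]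
    ring
  -- the integration by parts identity
  have hidentity : (∫ σ : ℝ, σ ^ 2 * f σ ^ 2 * w σ) / 2
      = (∫ σ : ℝ, f σ ^ 2 * w σ) + ∫ σ : ℝ, 2 * σ * f σ * deriv f σ * w σ := by
    have hintadd : Integrable (fun σ : ℝ => f σ ^ 2 * w σ + 2 * σ * f σ * deriv f σ * w σ) :=
      hintA.add hintM
    have hsplit : ∫ σ : ℝ, G σ
        = (∫ σ : ℝ, f σ ^ 2 * w σ) + (∫ σ : ℝ, 2 * σ * f σ * deriv f σ * w σ)
          - ∫ σ : ℝ, σ ^ 2 / 2 * f σ ^ 2 * w σ := by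
      simp only [hG_def]
      rw [integral_sub hintadd hintX2, integral_add hintA hintM]
    have hhalf : ∫ σ : ℝ, σ ^ 2 / 2 * f σ ^ 2 * w σ
        = (∫ σ : ℝ, σ ^ 2 * f σ ^ 2 * w σ) / 2 := by
      rw [← integral_div]
      congr 1
      funext σ
      ring
    rw [hG_zero, hhalf] at hsplit
    linarith
  -- pointwise bound on the cross term
  have hcross : (∫ σ : ℝ, 2 * σ * f σ * deriv f σ * w σ)
      ≤ (∫ σ : ℝ, σ ^ 2 * f σ ^ 2 * w σ) / 4 + 4 * ∫ σ : ℝ, deriv f σ ^ 2 * w σ := by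
    have hpt : ∀ σ : ℝ, 2 * σ * f σ * deriv f σ * w σ
        ≤ (σ ^ 2 * f σ ^ 2 / 4 + 4 * deriv f σ ^ 2) * w σ := by
      intro σ
      have hwpos : (0 : ℝ) < w σ := Real.exp_pos _
      have key : 2 * σ * f σ * deriv f σ ≤ σ ^ 2 * f σ ^ 2 / 4 + 4 * deriv f σ ^ 2 := by
        nlinarith [sq_nonneg (σ * f σ / 2 - 2 * deriv f σ)]
      exact mul_le_mul_of_nonneg_right key hwpos.le
    have heqR : (fun σ : ℝ => (σ ^ 2 * f σ ^ 2 / 4 + 4 * deriv f σ ^ 2) * w σ)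
        = fun σ : ℝ => σ ^ 2 * f σ ^ 2 * w σ / 4 + 4 * (deriv f σ ^ 2 * w σ) := by
      funext σ; ring
    have hRint : Integrable (fun σ : ℝ => (σ ^ 2 * f σ ^ 2 / 4 + 4 * deriv f σ ^ 2) * w σ) := by
      rw [heqR]
      exact (hintX.div_const 4).add (hintB.const_mul 4)
    calc (∫ σ : ℝ, 2 * σ * f σ * deriv f σ * w σ)
        ≤ ∫ σ : ℝ, (σ ^ 2 * f σ ^ 2 / 4 + 4 * deriv f σ ^ 2) * w σ :=
          integral_mono hintM hRint hpt
      _ = (∫ σ : ℝ, σ ^ 2 * f σ ^ 2 * w σ) / 4 + 4 * ∫ σ : ℝ, deriv f σ ^ 2 * w σ := by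
          rw [heqR, integral_add (hintX.div_const 4) (hintB.const_mul 4),
            integral_div, integral_const_mul]
  have hA_nonneg : (0 : ℝ) ≤ ∫ σ : ℝ, f σ ^ 2 * w σ :=
    integral_nonneg fun σ => mul_nonneg (sq_nonneg _) (Real.exp_pos _).le
  have hB_nonneg : (0 : ℝ) ≤ ∫ σ : ℝ, deriv f σ ^ 2 * w σ :=
    integral_nonneg fun σ => mul_nonneg (sq_nonneg _) (Real.exp_pos _).le
  have hRHS : (∫ σ : ℝ, (f σ ^ 2 + deriv f σ ^ 2) * w σ)
      = (∫ σ : ℝ, f σ ^ 2 * w σ) + ∫ σ : ℝ, deriv f σ ^ 2 * w σ := by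
    rw [← integral_add hintA hintB]
    congr 1
    funext σ
    ring
  rw [hRHS]
  linarith
end

section
/- Ancient Gronwall-type estimate: let F, G : (−∞, τ₀] → [0, ∞) be bounded continuous functions with F differentiable and satisfying F'(τ) ≤ −2λ|τ| F(τ) + C G(τ) for all τ ≤ τ₀ < 0, where λ, C > 0. Then there exists C' depending only on λ, C such that sup_{τ ≤ τ₀} |τ|^{−1/2} F(τ) ≤ (C'/|τ₀|) · sup_{τ ≤ τ₀} |τ|^{−1/2} G(τ). -/
/-!
With `c = C M / (2λ)` the function `c |τ|^{-1/2}` is a supersolution of `u' + 2λ|τ| u = C G`,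
because `2λ|τ| · c |τ|^{-1/2} = C M |τ|^{1/2} ≥ C G`. For the integrating factor `exp (-λ τ²)`,
`exp (-λ τ²) (F - c |τ|^{-1/2})` is nonincreasing on `(-∞, τ₀]` and bounded above by
`M₀ exp (-λ τ²) → 0`, so it is nonpositive. Hence `|τ|^{-1/2} F ≤ c / |τ| ≤ c / |τ₀|`.
-/

open Real Filter Set Topology

theorem tendsto_exp_neg_mul_sq_atBot {lam : ℝ} (hlam : 0 < lam) :
    Tendsto (fun s : ℝ => exp (-lam * s ^ 2)) atBot (𝓝 0) := by
  have hsq : Tendsto (fun s : ℝ => s ^ 2) atBot atTop := by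
    simpa [Function.comp_def, neg_sq] using
      (tendsto_pow_atTop (α := ℝ) two_ne_zero).comp tendsto_neg_atBot_atTop
  exact tendsto_exp_comp_nhds_zero.mpr (hsq.const_mul_atTop_of_neg (neg_neg_of_pos hlam))

theorem AntitoneOn.le_of_le_of_tendsto_atBot {f g : ℝ → ℝ} {a l : ℝ}
    (hf : AntitoneOn f (Iic a)) (hfg : ∀ s ≤ a, f s ≤ g s) (hg : Tendsto g atBot (𝓝 l)) :
    ∀ s ≤ a, f s ≤ l := fun s hs =>
  ge_of_tendsto hg <| (eventually_le_atBot s).mono fun t ht =>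
    (hf (ht.trans hs) hs ht).trans (hfg t (ht.trans hs))

theorem hasDerivAt_neg_rpow {p s : ℝ} (hs : s < 0) :
    HasDerivAt (fun t : ℝ => (-t) ^ p) (-(p * (-s) ^ (p - 1))) s := by
  simpa [Function.comp_def] using
    (hasDerivAt_rpow_const (p := p) (Or.inl (neg_ne_zero.mpr hs.ne))).comp s (hasDerivAt_neg s)

theorem ancient_comparison {lam a M₀ : ℝ} (hlam : 0 < lam) {F F' H H' : ℝ → ℝ}
    (hF : ∀ s ≤ a, HasDerivAt F (F' s) s) (hH : ∀ s ≤ a, HasDerivAt H (H' s) s)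
    (hFH' : ∀ s ≤ a, F' s - 2 * lam * s * F s ≤ H' s - 2 * lam * s * H s)
    (hFH : ∀ s ≤ a, F s - H s ≤ M₀) :
    ∀ s ≤ a, F s ≤ H s := by
  set ψ : ℝ → ℝ := fun s => exp (-lam * s ^ 2) * (F s - H s)
  have hψ' : ∀ s ≤ a, HasDerivAt ψ
      (exp (-lam * s ^ 2) * ((F' s - 2 * lam * s * F s) - (H' s - 2 * lam * s * H s))) s := by
    intro s hs
    have hexp : HasDerivAt (fun t : ℝ => exp (-lam * t ^ 2))
        (exp (-lam * s ^ 2) * (-lam * (2 * s))) s := by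
      simpa using ((hasDerivAt_pow 2 s).const_mul (-lam)).exp
    exact (hexp.mul ((hF s hs).sub (hH s hs))).congr_deriv (by simp only [Pi.sub_apply]; ring)
  have hanti : AntitoneOn ψ (Iic a) := by
    refine antitoneOn_of_hasDerivWithinAt_nonpos (convex_Iic a) (f' := fun s =>
      exp (-lam * s ^ 2) * ((F' s - 2 * lam * s * F s) - (H' s - 2 * lam * s * H s)))
      (fun s hs => (hψ' s hs).continuousAt.continuousWithinAt) (fun s hs => ?_) fun s hs => ?_
    · exact (hψ' s (interior_subset hs : s ∈ Iic a)).hasDerivWithinAt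
    rw [interior_Iic] at hs
    exact mul_nonpos_of_nonneg_of_nonpos (exp_pos _).le (sub_nonpos.mpr (hFH' s (le_of_lt hs)))
  have hψM₀ : ∀ s ≤ a, ψ s ≤ exp (-lam * s ^ 2) * M₀ := fun s hs =>
    mul_le_mul_of_nonneg_left (hFH s hs) (exp_pos _).le
  have hψ0 := hanti.le_of_le_of_tendsto_atBot hψM₀
    (by simpa using (tendsto_exp_neg_mul_sq_atBot hlam).mul_const M₀)
  intro s hs
  have := hψ0 s hs
  simp only [ψ] at this
  linarith [nonpos_of_mul_nonpos_right this (exp_pos _)]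

theorem rpow_neg_half_mul_self {x : ℝ} (hx : 0 < x) :
    x ^ (-(1 : ℝ) / 2) * x ^ (-(1 : ℝ) / 2) = x⁻¹ := by
  rw [← rpow_add hx]; norm_num [rpow_neg_one]

theorem rpow_neg_half_supersolution {lam C M g s : ℝ} (hlam : 0 < lam) (hC : 0 ≤ C)
    (hM : 0 ≤ M) (hs : s < 0) (hg : (-s) ^ (-(1 : ℝ) / 2) * g ≤ M) :
    C * g ≤ C / (2 * lam) * M * -((-(1 : ℝ) / 2) * (-s) ^ (-(1 : ℝ) / 2 - 1))
      - 2 * lam * s * (C / (2 * lam) * M * (-s) ^ (-(1 : ℝ) / 2)) := by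
  have hs0 : 0 < -s := by linarith
  set w := (-s) ^ (-(1 : ℝ) / 2)
  have hg' : g ≤ M * -s * w :=
    calc g = (-s) * (w * w) * g := by
          rw [rpow_neg_half_mul_self hs0, mul_inv_cancel₀ hs0.ne', one_mul]
      _ = (-s) * w * (w * g) := by ring
      _ ≤ (-s) * w * M := by gcongr
      _ = M * -s * w := by ring
  have hpos : 0 ≤ C / (2 * lam) * M * -((-(1 : ℝ) / 2) * (-s) ^ (-(1 : ℝ) / 2 - 1)) :=
    mul_nonneg (by positivity) (by linarith [rpow_nonneg hs0.le (-(1 : ℝ) / 2 - 1)])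
  have hCg : C * g ≤ -(2 * lam * s * (C / (2 * lam) * M * w)) :=
    calc C * g ≤ C * (M * -s * w) := by gcongr
      _ = _ := by field_simp
  linarith

/-- Ancient Gronwall-type estimate: if `F' ≤ -2λ|τ| F + C G` on `(-∞, τ₀]` with `F, G`
bounded, nonnegative and continuous, then
`sup_{τ ≤ τ₀} |τ|^{-1/2} F(τ) ≤ (C'/|τ₀|) sup_{τ ≤ τ₀} |τ|^{-1/2} G(τ)`
for a constant `C'` depending only on `λ` and `C`. -/
theorem stmt8 (lam C : ℝ) (hlam : 0 < lam) (hC : 0 < C) :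
    ∃ C' : ℝ, 0 < C' ∧
      ∀ (τ₀ : ℝ), τ₀ < 0 →
      ∀ (F G : ℝ → ℝ),
        (∀ τ ≤ τ₀, 0 ≤ F τ) → (∀ τ ≤ τ₀, 0 ≤ G τ) →
        ContinuousOn F (Set.Iic τ₀) → ContinuousOn G (Set.Iic τ₀) →
        (∃ M₀ : ℝ, ∀ τ ≤ τ₀, F τ ≤ M₀ ∧ G τ ≤ M₀) →
        (∀ τ ≤ τ₀, DifferentiableAt ℝ F τ) →
        (∀ τ ≤ τ₀, deriv F τ ≤ -2 * lam * |τ| * F τ + C * G τ) →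
        ∀ M : ℝ, (∀ τ ≤ τ₀, |τ| ^ (-(1 : ℝ) / 2) * G τ ≤ M) →
          ∀ τ ≤ τ₀, |τ| ^ (-(1 : ℝ) / 2) * F τ ≤ (C' / |τ₀|) * M := by
  refine ⟨C / (2 * lam), by positivity, ?_⟩
  intro τ₀ hτ₀ F G _ hG0 _ _ ⟨M₀, hFG⟩ hF hFG' M hM τ hτ
  have hM0 : 0 ≤ M := (mul_nonneg (by positivity) (hG0 τ₀ le_rfl)).trans (hM τ₀ le_rfl)
  set c := C / (2 * lam) * M with hc
  have hc0 : 0 ≤ c := by positivity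
  have hFc : ∀ s ≤ τ₀, F s ≤ c * (-s) ^ (-(1 : ℝ) / 2) :=
    ancient_comparison (M₀ := M₀) hlam (fun s hs => (hF s hs).hasDerivAt)
      (fun s hs => (hasDerivAt_neg_rpow (hs.trans_lt hτ₀)).const_mul c)
      (fun s hs => by
        have hs0 : s < 0 := hs.trans_lt hτ₀
        have hsub := hFG' s hs
        have hsuper := rpow_neg_half_supersolution hlam hC.le hM0 hs0
          (abs_of_neg hs0 ▸ hM s hs)
        rw [abs_of_neg hs0] at hsub
        linarith)
      (fun s hs => by
        have hw := rpow_nonneg (neg_nonneg.mpr (hs.trans hτ₀.le)) (-(1 : ℝ) / 2)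
        linarith [(hFG s hs).1, mul_nonneg hc0 hw])
  rw [abs_of_neg (hτ.trans_lt hτ₀), abs_of_neg hτ₀]
  have hτ0 : 0 < -τ := by linarith
  calc (-τ) ^ (-(1 : ℝ) / 2) * F τ
      ≤ (-τ) ^ (-(1 : ℝ) / 2) * (c * (-τ) ^ (-(1 : ℝ) / 2)) :=
        mul_le_mul_of_nonneg_left (hFc τ hτ) (rpow_nonneg hτ0.le _)
    _ = c * (-τ)⁻¹ := by rw [mul_left_comm, rpow_neg_half_mul_self hτ0]
    _ ≤ c * (-τ₀)⁻¹ := by gcongr; linarith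
    _ = C / (2 * lam) / -τ₀ * M := by rw [hc]; ring
end

section
/- Monotone cutoff Fubini bound: let φ : [0,∞) → [0,1] be nonincreasing with support in [0, M], and let w be measurable with ∫₀^M w² dσ < ∞. Then ∫₀^∞ φ(σ)² (∫₀^σ |w(σ')| dσ')² e^{−σ²/4} dσ ≤ C ∫₀^M φ(σ')² w(σ')² e^{−σ'²/4} dσ' for an absolute constant C. -/
/-!
By Cauchy–Schwarz, `(∫₀^σ |w|)² ≤ σ ∫₀^σ w²`, and since `φ` is nonincreasing,
`φ(σ)² ∫₀^σ w² ≤ ∫₀^σ φ² w²`. Hence the left side is at most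
`∫₀^∞ σ e^{-σ²/4} ∫₀^σ φ(t)² w(t)² dt dσ`; exchanging the integrals (Tonelli) and using
`∫_t^∞ σ e^{-σ²/4} dσ = 2 e^{-t²/4}` bounds this by `2 ∫₀^M φ² w² e^{-t²/4}`, so `C = 2`.
The estimates are carried out for lower Lebesgue integrals, where Tonelli needs no
integrability, and converted back to Bochner integrals only at the end.
-/

open MeasureTheory Set Filter Topology
open scoped ENNReal

theorem sq_lintegral_le_measure_univ_mul_lintegral_sq {α : Type*} [MeasurableSpace α]
    {μ : Measure α} {f : α → ℝ≥0∞} (hf : AEMeasurable f μ) :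
    (∫⁻ a, f a ∂μ) ^ 2 ≤ μ univ * ∫⁻ a, f a ^ 2 ∂μ := by
  have h := ENNReal.lintegral_mul_le_Lp_mul_Lq μ Real.HolderConjugate.two_two hf
    (aemeasurable_const (b := (1 : ℝ≥0∞)))
  simp only [Pi.mul_apply, mul_one, ENNReal.one_rpow, lintegral_const, one_mul] at h
  calc (∫⁻ a, f a ∂μ) ^ 2 ≤ ((∫⁻ a, f a ^ (2:ℝ) ∂μ) ^ (1/2:ℝ) * μ univ ^ (1/2:ℝ)) ^ 2 := by
        gcongr
    _ = μ univ * ∫⁻ a, f a ^ 2 ∂μ := by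
        rw [mul_pow, ← ENNReal.rpow_natCast, ← ENNReal.rpow_natCast (μ univ ^ _),
          ← ENNReal.rpow_mul, ← ENNReal.rpow_mul]
        norm_num [mul_comm]

theorem lintegral_Ioi_mul_exp_neg_mul_sq {a b : ℝ} (ha : 0 ≤ a) (hb : 0 < b) :
    ∫⁻ x in Ioi a, ENNReal.ofReal (x * Real.exp (-b * x ^ 2)) =
      ENNReal.ofReal (Real.exp (-b * a ^ 2) / (2 * b)) := by
  have hderiv : ∀ x ∈ Ici a, HasDerivAt (fun x => -1 / (2 * b) * Real.exp (-b * x ^ 2))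
      (x * Real.exp (-b * x ^ 2)) x := fun x _ => by
    refine (((hasDerivAt_pow 2 x).const_mul (-b)).exp.const_mul (-1 / (2 * b))).congr_deriv ?_
    field_simp
    ring
  have hnonneg : ∀ x ∈ Ioi a, 0 ≤ x * Real.exp (-b * x ^ 2) := fun x hx =>
    mul_nonneg (ha.trans hx.le) (Real.exp_nonneg _)
  have hlim : Tendsto (fun x => -1 / (2 * b) * Real.exp (-b * x ^ 2)) atTop (𝓝 0) := by
    have hsq : Tendsto (fun x : ℝ => -b * x ^ 2) atTop atBot :=
      (tendsto_pow_atTop two_ne_zero).const_mul_atTop_of_neg (neg_neg_of_pos hb)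
    simpa using (Real.tendsto_exp_atBot.comp hsq).const_mul (-1 / (2 * b))
  rw [← ofReal_integral_eq_lintegral_ofReal (integrableOn_Ioi_deriv_of_nonneg' hderiv hnonneg hlim)
    ((ae_restrict_iff' measurableSet_Ioi).mpr (ae_of_all _ hnonneg)),
    integral_Ioi_of_hasDerivAt_of_nonneg' hderiv hnonneg hlim]
  congr 1
  ring

theorem lintegral_mul_setLIntegral_Iic_eq {α : Type*} [MeasurableSpace α] [TopologicalSpace α]
    [LinearOrder α] [OrderClosedTopology α] [SecondCountableTopology α] [OpensMeasurableSpace α]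
    {μ : Measure α} [SFinite μ] {f g : α → ℝ≥0∞} (hf : AEMeasurable f μ)
    (hg : AEMeasurable g μ) :
    ∫⁻ x, f x * ∫⁻ y in Iic x, g y ∂μ ∂μ = ∫⁻ y, g y * ∫⁻ x in Ici y, f x ∂μ ∂μ := by
  set K : α × α → ℝ≥0∞ := {p | p.2 ≤ p.1}.indicator fun p => f p.1 * g p.2
  have hK : AEMeasurable K (μ.prod μ) :=
    (hf.comp_fst.mul hg.comp_snd).indicator (measurableSet_le measurable_snd measurable_fst)
  have hx : ∀ x, f x * ∫⁻ y in Iic x, g y ∂μ = ∫⁻ y, K (x, y) ∂μ := fun x => by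
    rw [← lintegral_const_mul'' _ hg.restrict, ← lintegral_indicator measurableSet_Iic]
    rfl
  have hy : ∀ y, g y * ∫⁻ x in Ici y, f x ∂μ = ∫⁻ x, K (x, y) ∂μ := fun y => by
    rw [← lintegral_const_mul'' _ hf.restrict, ← lintegral_indicator measurableSet_Ici]
    congr 1
    ext x
    simp only [K, indicator, mem_Ici, mem_ofPred_eq, mul_comm]
  simp_rw [hx, hy]
  exact lintegral_lintegral_swap hK

theorem ofReal_sq_mul_sq_setIntegral_abs_le {φ w : ℝ → ℝ} {σ : ℝ} (hφσ : 0 ≤ φ σ)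
    (hφ : ∀ t ∈ Ioc 0 σ, φ σ ≤ φ t) (hw : AEMeasurable w (volume.restrict (Ioc 0 σ))) :
    ENNReal.ofReal (φ σ ^ 2 * (∫ t in Ioc 0 σ, |w t|) ^ 2) ≤
      ENNReal.ofReal σ * ∫⁻ t in Ioc 0 σ, ENNReal.ofReal (φ t ^ 2 * w t ^ 2) := by
  have hL1 : ENNReal.ofReal (∫ t in Ioc 0 σ, |w t|) ≤ ∫⁻ t in Ioc 0 σ, ENNReal.ofReal |w t| :=
    calc ENNReal.ofReal (∫ t in Ioc 0 σ, |w t|)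
        ≤ ‖∫ t in Ioc 0 σ, |w t|‖ₑ := by
          rw [Real.enorm_eq_ofReal_abs]; exact ENNReal.ofReal_le_ofReal (le_abs_self _)
      _ ≤ ∫⁻ t in Ioc 0 σ, ‖|w t|‖ₑ := enorm_integral_le_lintegral_enorm _
      _ = ∫⁻ t in Ioc 0 σ, ENNReal.ofReal |w t| := by simp_rw [Real.enorm_eq_ofReal_abs, abs_abs]
  have hCS := sq_lintegral_le_measure_univ_mul_lintegral_sq (hw.abs.ennreal_ofReal)
  simp only [Measure.restrict_apply_univ, Real.volume_Ioc, sub_zero,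
    ← ENNReal.ofReal_pow (abs_nonneg _), sq_abs] at hCS
  calc ENNReal.ofReal (φ σ ^ 2 * (∫ t in Ioc 0 σ, |w t|) ^ 2)
      = ENNReal.ofReal (φ σ ^ 2) * ENNReal.ofReal (∫ t in Ioc 0 σ, |w t|) ^ 2 := by
        rw [ENNReal.ofReal_mul (sq_nonneg _),
          ENNReal.ofReal_pow (setIntegral_nonneg measurableSet_Ioc fun t _ => abs_nonneg _)]
    _ ≤ ENNReal.ofReal (φ σ ^ 2) *
          (ENNReal.ofReal σ * ∫⁻ t in Ioc 0 σ, ENNReal.ofReal (w t ^ 2)) := by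
        gcongr
        exact (pow_le_pow_left' hL1 2).trans hCS
    _ = ENNReal.ofReal σ *
          ∫⁻ t in Ioc 0 σ, ENNReal.ofReal (φ σ ^ 2) * ENNReal.ofReal (w t ^ 2) := by
        rw [lintegral_const_mul' _ _ ENNReal.ofReal_ne_top]
        ring
    _ ≤ ENNReal.ofReal σ * ∫⁻ t in Ioc 0 σ, ENNReal.ofReal (φ t ^ 2 * w t ^ 2) := by
        gcongr ENNReal.ofReal σ * ?_
        refine setLIntegral_mono' measurableSet_Ioc fun t ht => ?_
        rw [← ENNReal.ofReal_mul (sq_nonneg _)]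
        gcongr
        exact hφ t ht

theorem lintegral_sq_setIntegral_abs_mul_le {ρ : ℝ → ℝ} {K : ℝ≥0∞} (hρ : Measurable ρ)
    (htail : ∀ t > 0, ∫⁻ σ in Ioi t, ENNReal.ofReal (σ * ρ σ) ≤ K * ENNReal.ofReal (ρ t))
    {φ w : ℝ → ℝ} (hφ : AntitoneOn φ (Ioi 0)) (hφ0 : ∀ σ > 0, 0 ≤ φ σ) (hw : Measurable w) :
    ∫⁻ σ in Ioi 0, ENNReal.ofReal (φ σ ^ 2 * (∫ t in Ioc 0 σ, |w t|) ^ 2 * ρ σ) ≤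
      K * ∫⁻ σ in Ioi 0, ENNReal.ofReal (φ σ ^ 2 * w σ ^ 2 * ρ σ) := by
  set μ := volume.restrict (Ioi (0 : ℝ))
  set G : ℝ → ℝ≥0∞ := fun t => ENNReal.ofReal (φ t ^ 2 * w t ^ 2)
  have hφm : AEMeasurable φ μ := aemeasurable_restrict_of_antitoneOn measurableSet_Ioi hφ
  have hG : AEMeasurable G μ :=
    ((hφm.pow_const 2).mul (hw.aemeasurable.pow_const 2)).ennreal_ofReal
  have hweight : AEMeasurable (fun σ => ENNReal.ofReal (σ * ρ σ)) μ :=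
    (measurable_id.mul hρ).ennreal_ofReal.aemeasurable
  have hIic : ∀ σ : ℝ, μ.restrict (Iic σ) = volume.restrict (Ioc 0 σ) := fun σ => by
    rw [Measure.restrict_restrict measurableSet_Iic, Iic_inter_Ioi]
  have hIci : ∀ t > 0, ∫⁻ σ in Ici t, ENNReal.ofReal (σ * ρ σ) ∂μ ≤ K * ENNReal.ofReal (ρ t) :=
    fun t ht => calc
      _ ≤ ∫⁻ σ in Ici t, ENNReal.ofReal (σ * ρ σ) := by
        rw [Measure.restrict_restrict measurableSet_Ici]
        exact lintegral_mono_set inter_subset_left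
      _ = ∫⁻ σ in Ioi t, ENNReal.ofReal (σ * ρ σ) := setLIntegral_congr Ioi_ae_eq_Ici.symm
      _ ≤ K * ENNReal.ofReal (ρ t) := htail t ht
  calc ∫⁻ σ in Ioi 0, ENNReal.ofReal (φ σ ^ 2 * (∫ t in Ioc 0 σ, |w t|) ^ 2 * ρ σ)
      ≤ ∫⁻ σ, ENNReal.ofReal (σ * ρ σ) * ∫⁻ t in Iic σ, G t ∂μ ∂μ := by
        refine setLIntegral_mono' measurableSet_Ioi fun σ hσ => ?_
        rw [hIic, ENNReal.ofReal_mul (by positivity), ENNReal.ofReal_mul hσ.le, mul_right_comm]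
        gcongr
        exact ofReal_sq_mul_sq_setIntegral_abs_le (hφ0 σ hσ)
          (fun t ht => hφ ht.1 hσ ht.2) hw.aemeasurable
    _ = ∫⁻ t, G t * ∫⁻ σ in Ici t, ENNReal.ofReal (σ * ρ σ) ∂μ ∂μ :=
        lintegral_mul_setLIntegral_Iic_eq hweight hG
    _ ≤ ∫⁻ t in Ioi 0, G t * (K * ENNReal.ofReal (ρ t)) :=
        setLIntegral_mono' measurableSet_Ioi fun t ht => by gcongr; exact hIci t ht
    _ = K * ∫⁻ σ in Ioi 0, ENNReal.ofReal (φ σ ^ 2 * w σ ^ 2 * ρ σ) := by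
        have hprod : ∀ t, G t * (K * ENNReal.ofReal (ρ t)) =
            K * ENNReal.ofReal (φ t ^ 2 * w t ^ 2 * ρ t) := fun t => by
          rw [ENNReal.ofReal_mul (by positivity)]
          ring
        simp_rw [hprod]
        exact lintegral_const_mul'' _
          (((hφm.pow_const 2).mul (hw.aemeasurable.pow_const 2)).mul hρ.aemeasurable).ennreal_ofReal

theorem integral_le_of_lintegral_ofReal_le {α : Type*} [MeasurableSpace α] {μ : Measure α}
    {f : α → ℝ} {c : ℝ} (hf : 0 ≤ᵐ[μ] f) (hc : 0 ≤ c)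
    (h : ∫⁻ x, ENNReal.ofReal (f x) ∂μ ≤ ENNReal.ofReal c) : ∫ x, f x ∂μ ≤ c :=
  calc ∫ x, f x ∂μ ≤ ‖∫ x, f x ∂μ‖ := Real.le_norm_self _
    _ ≤ (∫⁻ x, ENNReal.ofReal ‖f x‖ ∂μ).toReal := norm_integral_le_lintegral_norm _
    _ = (∫⁻ x, ENNReal.ofReal (f x) ∂μ).toReal := by
      rw [lintegral_congr_ae (hf.mono fun x hx => by rw [Real.norm_of_nonneg hx])]
    _ ≤ c := ENNReal.toReal_le_of_le_ofReal hc h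

theorem lintegral_Ioi_mul_exp_neg_sq_div_four_le {t : ℝ} (ht : 0 ≤ t) :
    ∫⁻ σ in Ioi t, ENNReal.ofReal (σ * Real.exp (-σ ^ 2 / 4)) ≤
      2 * ENNReal.ofReal (Real.exp (-t ^ 2 / 4)) := by
  have h := lintegral_Ioi_mul_exp_neg_mul_sq ht (show (0 : ℝ) < 1 / 4 by norm_num)
  have hquarter : ∀ x : ℝ, -(1 / 4) * x ^ 2 = -x ^ 2 / 4 := fun x => by ring
  simp only [hquarter] at h
  rw [h, ← ENNReal.ofReal_ofNat 2, ← ENNReal.ofReal_mul zero_le_two]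
  norm_num [div_div_eq_mul_div, mul_comm]

/-- Monotone cutoff Fubini bound: for a nonincreasing cutoff `φ : [0,∞) → [0,1]`
supported in `[0, M]` and `w` with `∫₀^M w² < ∞`, one has
`∫₀^∞ φ² (∫₀^σ |w|)² e^{-σ²/4} dσ ≤ C ∫₀^M φ² w² e^{-σ²/4} dσ` for an absolute `C`. -/
theorem stmt17 :
    ∃ C : ℝ, 0 < C ∧
      ∀ (M : ℝ) (φ w : ℝ → ℝ), 0 < M →
        (∀ σ, 0 ≤ φ σ ∧ φ σ ≤ 1) →
        AntitoneOn φ (Set.Ici 0) →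
        (∀ σ ≥ M, φ σ = 0) →
        Measurable w →
        IntegrableOn (fun σ => (w σ) ^ 2) (Set.Ioc 0 M) →
        ∫ σ in Set.Ioi (0 : ℝ),
            (φ σ) ^ 2 * (∫ σ' in Set.Ioc (0 : ℝ) σ, |w σ'|) ^ 2 * Real.exp (-σ ^ 2 / 4)
          ≤ C * ∫ σ' in Set.Ioc (0 : ℝ) M,
              (φ σ') ^ 2 * (w σ') ^ 2 * Real.exp (-σ' ^ 2 / 4) := by
  refine ⟨2, two_pos, fun M φ w _ hφ hanti hsupp hw hw2 => ?_⟩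
  set h : ℝ → ℝ := fun σ => φ σ ^ 2 * w σ ^ 2 * Real.exp (-σ ^ 2 / 4)
  have h_nonneg : ∀ σ, 0 ≤ h σ := fun σ => by positivity
  have h_vanish : ∀ σ ∈ Ioi 0 \ Ioc 0 M, h σ = 0 := fun σ hσ => by
    simp [h, hsupp σ (not_le.1 fun hσM => hσ.2 ⟨hσ.1, hσM⟩).le]
  have hφm : AEMeasurable φ (volume.restrict (Ioc 0 M)) :=
    aemeasurable_restrict_of_antitoneOn measurableSet_Ioc
      (hanti.mono (Ioc_subset_Ioi_self.trans Ioi_subset_Ici_self))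
  have h_int : IntegrableOn h (Ioc 0 M) :=
    (hw2.bdd_mul (c := 1) (hφm.pow_const 2).aestronglyMeasurable (ae_of_all _ fun σ => by
      rw [norm_pow, Real.norm_of_nonneg (hφ σ).1]
      exact pow_le_one₀ (hφ σ).1 (hφ σ).2)).mul_bdd (c := 1) (by fun_prop)
      (ae_of_all _ fun σ => by
        rw [Real.norm_of_nonneg (Real.exp_nonneg _), Real.exp_le_one_iff]
        exact div_nonpos_of_nonpos_of_nonneg (neg_nonpos.2 (sq_nonneg σ)) zero_le_four)
  have h_rhs : ∫⁻ σ in Ioi 0, ENNReal.ofReal (h σ) = ENNReal.ofReal (∫ σ in Ioc 0 M, h σ) := by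
    rw [← setIntegral_eq_of_subset_of_forall_sdiff_eq_zero measurableSet_Ioi Ioc_subset_Ioi_self
      h_vanish, ofReal_integral_eq_lintegral_ofReal
      (h_int.of_forall_sdiff_eq_zero measurableSet_Ioi h_vanish) (ae_of_all _ h_nonneg)]
  refine integral_le_of_lintegral_ofReal_le (ae_of_all _ fun σ => by positivity)
    (mul_nonneg zero_le_two (setIntegral_nonneg measurableSet_Ioc fun σ _ => h_nonneg σ)) ?_
  rw [ENNReal.ofReal_mul zero_le_two, ENNReal.ofReal_ofNat, ← h_rhs]
  exact lintegral_sq_setIntegral_abs_mul_le (by fun_prop)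
    (fun t ht => lintegral_Ioi_mul_exp_neg_sq_div_four_le ht.le)
    (hanti.mono Ioi_subset_Ici_self) (fun σ _ => (hφ σ).1) hw
end

section
/- Boundary-weighted Poincaré inequality on an interval: for any ℓ > 0 and smooth v : [0, ℓ] → ℝ, one has ∫₀^ℓ v'(σ)² e^{−σ²/4} dσ + (1/4)∫₀^ℓ v(σ)² e^{−σ²/4} dσ ≥ (1/4) ℓ e^{−ℓ²/4} v(ℓ)² + (1/16)∫₀^ℓ σ² v(σ)² e^{−σ²/4} dσ. -/
/-!
With `E σ = e^{-σ²/4}`, so that `E' = -(σ/2) E`, the boundary term `G σ = (σ/4) v² E` satisfies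
`v'² E + (1/4) v² E - (1/16) σ² v² E = G' + (v' - σ v / 4)² E ≥ G'`.
Integrating over `[a, b]` gives the inequality with boundary terms `G b - G a`, and `G 0 = 0`.
-/

open Set Real intervalIntegral

theorem hasDerivAt_exp_neg_sq_div_four (x : ℝ) :
    HasDerivAt (fun σ => exp (-σ ^ 2 / 4)) (-(x / 2) * exp (-x ^ 2 / 4)) x := by
  have h := ((hasDerivAt_pow 2 x).fun_neg.div_const 4).exp
  convert h using 1
  push_cast
  ring

section WeightedPoincare

variable {a b : ℝ} {v : ℝ → ℝ}

theorem ContDiffOn.hasDerivAt_derivWithin_Icc (hv : ContDiffOn ℝ 1 v (Icc a b)) {x : ℝ}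
    (hx : x ∈ Ioo a b) : HasDerivAt v (derivWithin v (Icc a b) x) x :=
  (hv.differentiableOn one_ne_zero x (Ioo_subset_Icc_self hx)).hasDerivWithinAt.hasDerivAt
    (Icc_mem_nhds hx.1 hx.2)

theorem boundary_term_sub_le_integral (hab : a < b) (hv : ContDiffOn ℝ 1 v (Icc a b)) :
    b / 4 * v b ^ 2 * exp (-b ^ 2 / 4) - a / 4 * v a ^ 2 * exp (-a ^ 2 / 4)
      ≤ ∫ σ in a..b, (derivWithin v (Icc a b) σ ^ 2 + v σ ^ 2 / 4 - σ ^ 2 * v σ ^ 2 / 16)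
          * exp (-σ ^ 2 / 4) := by
  set v' := derivWithin v (Icc a b)
  have hv'c : ContinuousOn v' (Icc a b) := hv.continuousOn_derivWithin (uniqueDiffOn_Icc hab) le_rfl
  have hvc : ContinuousOn v (Icc a b) := hv.continuousOn
  refine sub_le_integral_of_hasDeriv_right_of_le (g := fun σ => σ / 4 * v σ ^ 2 * exp (-σ ^ 2 / 4))
    (g' := fun σ => (v σ ^ 2 / 4 + σ * v σ * v' σ / 2 - σ ^ 2 * v σ ^ 2 / 8) * exp (-σ ^ 2 / 4))
    hab.le (by fun_prop) (fun x hx => ?_) (ContinuousOn.integrableOn_Icc (by fun_prop))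
    (fun x _ => ?_)
  · have h := (((hasDerivAt_id x).div_const 4).mul ((hv.hasDerivAt_derivWithin_Icc hx).pow 2)).mul
      (hasDerivAt_exp_neg_sq_div_four x)
    refine (h.congr_deriv ?_).hasDerivWithinAt
    simp only [id, Pi.mul_apply, Pi.pow_apply, Nat.cast_ofNat]
    ring
  · have hsq : 0 ≤ (v' x - x * v x / 4) ^ 2 * exp (-x ^ 2 / 4) := by positivity
    linear_combination hsq

theorem weighted_poincare_Icc (hab : a < b) (hv : ContDiffOn ℝ 1 v (Icc a b)) :
    b / 4 * v b ^ 2 * exp (-b ^ 2 / 4) - a / 4 * v a ^ 2 * exp (-a ^ 2 / 4)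
      + (1 / 16) * ∫ σ in a..b, σ ^ 2 * v σ ^ 2 * exp (-σ ^ 2 / 4)
    ≤ (∫ σ in a..b, derivWithin v (Icc a b) σ ^ 2 * exp (-σ ^ 2 / 4))
      + (1 / 4) * ∫ σ in a..b, v σ ^ 2 * exp (-σ ^ 2 / 4) := by
  set v' := derivWithin v (Icc a b)
  have hv'c : ContinuousOn v' (Icc a b) := hv.continuousOn_derivWithin (uniqueDiffOn_Icc hab) le_rfl
  have hvc : ContinuousOn v (Icc a b) := hv.continuousOn
  have hi1 : IntervalIntegrable (fun σ => v' σ ^ 2 * exp (-σ ^ 2 / 4)) MeasureTheory.volume a b :=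
    ContinuousOn.intervalIntegrable_of_Icc hab.le (by fun_prop)
  have hi2 : IntervalIntegrable (fun σ => v σ ^ 2 * exp (-σ ^ 2 / 4)) MeasureTheory.volume a b :=
    ContinuousOn.intervalIntegrable_of_Icc hab.le (by fun_prop)
  have hi3 : IntervalIntegrable (fun σ => σ ^ 2 * v σ ^ 2 * exp (-σ ^ 2 / 4))
      MeasureTheory.volume a b :=
    ContinuousOn.intervalIntegrable_of_Icc hab.le (by fun_prop)
  have hsplit : (∫ σ in a..b, (v' σ ^ 2 + v σ ^ 2 / 4 - σ ^ 2 * v σ ^ 2 / 16) * exp (-σ ^ 2 / 4))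
      = (∫ σ in a..b, v' σ ^ 2 * exp (-σ ^ 2 / 4))
        + (1 / 4) * (∫ σ in a..b, v σ ^ 2 * exp (-σ ^ 2 / 4))
        - (1 / 16) * ∫ σ in a..b, σ ^ 2 * v σ ^ 2 * exp (-σ ^ 2 / 4) := by
    rw [← integral_const_mul, ← integral_const_mul, ← integral_add hi1 (hi2.const_mul _),
      ← integral_sub (hi1.add (hi2.const_mul _)) (hi3.const_mul _)]
    exact integral_congr fun σ _ => by ring
  linarith [boundary_term_sub_le_integral hab hv]

end WeightedPoincare

/-- Boundary-weighted Poincaré inequality on `[0, ℓ]` with weight `e^{-σ²/4} dσ`. -/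
theorem stmt18 (ℓ : ℝ) (hℓ : 0 < ℓ) (v : ℝ → ℝ)
    (hv : ContDiffOn ℝ 1 v (Set.Icc 0 ℓ)) :
    (1 / 4) * ℓ * Real.exp (-ℓ ^ 2 / 4) * (v ℓ) ^ 2
      + (1 / 16) * ∫ σ in (0 : ℝ)..ℓ, σ ^ 2 * (v σ) ^ 2 * Real.exp (-σ ^ 2 / 4)
    ≤ (∫ σ in (0 : ℝ)..ℓ, (derivWithin v (Set.Icc 0 ℓ) σ) ^ 2 * Real.exp (-σ ^ 2 / 4))
      + (1 / 4) * ∫ σ in (0 : ℝ)..ℓ, (v σ) ^ 2 * Real.exp (-σ ^ 2 / 4) := by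
  have h := weighted_poincare_Icc hℓ hv
  simp only [zero_div, zero_mul, sub_zero] at h
  linarith
end
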